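/- Let 1<p<∞, let I be an arc of the unit circle, and define φ_h(z) = (1/h)∫_{S_{I,h}} (1−|λ|²)^{p−1}/|1−conj(λ)z|^p dA(λ), where dA is planar area measure. There exists a constant c>0 depending only on p such that for every arc I, every 0<h≤|I|, and every point z in the closure of I (i.e. z = e^{iθ₀} with e^{iθ₀} in the closed arc I), one has φ_h(z) ≥ c. -/

import Mathlib

open MeasureTheory Complex Set Metric

noncomputable section

/-- The `p`-th power mean of `f` on the circle of radius `r` (normalized by `2π`). -/
def hIntegral (p : ℝ) (f : ℂ → ℂ) (r : ℝ) : ℝ :=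
  (1 / (2 * Real.pi)) *
    ∫ θ in (0:ℝ)..(2 * Real.pi), ‖f ((r : ℂ) * Complex.exp (θ * Complex.I))‖ ^ p

/-- `‖f‖_p ^ p`, the `p`-th power of the Hardy space `H^p` norm. -/
def hNormPow (p : ℝ) (f : ℂ → ℂ) : ℝ := sSup (hIntegral p f '' Ioo (0:ℝ) 1)

/-- The Hardy space `H^p` norm. -/
def hNorm (p : ℝ) (f : ℂ → ℂ) : ℝ := hNormPow p f ^ (1 / p)

/-- `f` has finite `H^p` norm. -/
def HpFinite (p : ℝ) (f : ℂ → ℂ) : Prop := BddAbove (hIntegral p f '' Ioo (0:ℝ) 1)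

/-- The `H^p` reproducing kernel `k_λ(z) = 1/(1 - conj(λ) z)`. -/
def hker (l : ℂ) : ℂ → ℂ := fun z => 1 / (1 - (starRingEnd ℂ) l * z)

/-- The normalized reproducing kernel `K_λ = k_λ / ‖k_λ‖_p`. -/
def hkerN (p : ℝ) (l : ℂ) : ℂ → ℂ := fun z => hker l z / (hNorm p (hker l) : ℂ)

/-- The arc of the unit circle starting at angle `a` of normalized length `ℓ`. -/
def cArc (a ℓ : ℝ) : Set ℂ :=
  (fun θ : ℝ => Complex.exp (θ * Complex.I)) '' Ico a (a + 2 * Real.pi * ℓ)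

/-- The modified Carleson window `S_{I,h}` over the arc of normalized length `ℓ`
starting at angle `a`, with radial depth `h`. -/
def cWindowH (a ℓ h : ℝ) : Set ℂ :=
  {z : ℂ | 1 - h ≤ ‖z‖ ∧ ‖z‖ ≤ 1 ∧ z / (‖z‖ : ℂ) ∈ cArc a ℓ}

/-- The Carleson window `S_I`. -/
def cWindow (a ℓ : ℝ) : Set ℂ := cWindowH a ℓ ℓ

/-- Normalized Lebesgue (arclength over `2π`) measure on the unit circle `∂𝔻`. -/
def circM : Measure ℂ :=
  (ENNReal.ofReal (1 / (2 * Real.pi))) •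
    Measure.map (fun θ : ℝ => Complex.exp (θ * Complex.I))
      (volume.restrict (Ico (0:ℝ) (2 * Real.pi)))

end

noncomputable section
/-- `φ_h(z) = (1/h) ∫_{S_{I,h}} (1-|λ|²)^{p-1} / |1 - conj(λ) z|^p dA(λ)`, where `dA` is
planar area (Lebesgue) measure and `I` is the arc at angle `a` of normalized length `ℓ`. -/
def cPhi (p a ℓ h : ℝ) (z : ℂ) : ℝ :=
  (1 / h) * ∫ l in cWindowH a ℓ h,
    (1 - ‖l‖ ^ 2) ^ (p - 1) / ‖1 - (starRingEnd ℂ) l * z‖ ^ p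
end

open scoped Real ComplexConjugate

/-!
Fix `z = e^{iθ}` in the closed arc. The window `S_{I,h}` contains the disc of radius `h / 8`
centred at `(1 - h / 2) e^{it}` for some `t` with `|θ - t| ≤ h`. On that disc
`1 - |λ|² ≥ h / 4` and `|1 - conj(λ) z| = |λ - z| ≤ 2h`, so the integrand is at least
`8^{1-p} / (2h)`, while the disc has area `π h² / 64`; hence `φ_h(z) ≥ π 8^{1-p} / 128`.
For this bound to say anything about the Bochner integral the integrand must be integrable,
which holds on the closed unit disc because it is at most `2^{p-1} / |λ - z|`.
-/

-- At `d = 0` both sides vanish by the convention `x / 0 = 0`.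
lemma rpow_sub_one_div_rpow {a d p : ℝ} (ha : 0 ≤ a) (hd : 0 ≤ d) (hp : p ≠ 0) :
    a ^ (p - 1) / d ^ p = (a / d) ^ (p - 1) / d := by
  rcases hd.eq_or_lt with rfl | hd
  · simp [Real.zero_rpow hp]
  · rw [Real.div_rpow ha hd.le, div_div, ← Real.rpow_add_one hd.ne', sub_add_cancel]

lemma norm_one_sub_conj_mul {z : ℂ} (hz : ‖z‖ = 1) (l : ℂ) : ‖1 - conj l * z‖ = ‖l - z‖ := by
  have : 1 - conj l * z = conj (z - l) * z := by
    rw [map_sub, sub_mul, Complex.conj_mul', hz]; push_cast; ring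
  rw [this, norm_mul, Complex.norm_conj, hz, mul_one, norm_sub_rev]

noncomputable def phiIntegrand (p : ℝ) (z l : ℂ) : ℝ :=
  (1 - ‖l‖ ^ 2) ^ (p - 1) / ‖1 - conj l * z‖ ^ p

lemma cPhi_eq (p a ℓ h : ℝ) (z : ℂ) :
    cPhi p a ℓ h z = 1 / h * ∫ l in cWindowH a ℓ h, phiIntegrand p z l := rfl

section phiIntegrand

variable {p : ℝ} {z l : ℂ}

lemma one_sub_norm_sq_nonneg (hl : ‖l‖ ≤ 1) : 0 ≤ 1 - ‖l‖ ^ 2 := by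
  nlinarith [norm_nonneg l]

lemma one_sub_norm_sq_le (hz : ‖z‖ = 1) (hl : ‖l‖ ≤ 1) : 1 - ‖l‖ ^ 2 ≤ 2 * ‖l - z‖ := by
  have := norm_sub_norm_le z l
  rw [hz, norm_sub_rev] at this
  nlinarith [norm_nonneg l]

lemma phiIntegrand_nonneg (hl : ‖l‖ ≤ 1) : 0 ≤ phiIntegrand p z l :=
  div_nonneg (Real.rpow_nonneg (one_sub_norm_sq_nonneg hl) _) (Real.rpow_nonneg (norm_nonneg _) _)

lemma phiIntegrand_eq (hp : p ≠ 0) (hz : ‖z‖ = 1) (hl : ‖l‖ ≤ 1) :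
    phiIntegrand p z l = ((1 - ‖l‖ ^ 2) / ‖l - z‖) ^ (p - 1) / ‖l - z‖ := by
  rw [phiIntegrand, norm_one_sub_conj_mul hz,
    rpow_sub_one_div_rpow (one_sub_norm_sq_nonneg hl) (norm_nonneg _) hp]

lemma phiIntegrand_le (hp : 1 ≤ p) (hz : ‖z‖ = 1) (hl : ‖l‖ ≤ 1) :
    phiIntegrand p z l ≤ 2 ^ (p - 1) * ‖l - z‖⁻¹ := by
  rw [phiIntegrand_eq (by linarith) hz hl, div_eq_mul_inv]
  have hratio : (1 - ‖l‖ ^ 2) / ‖l - z‖ ≤ 2 :=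
    div_le_of_le_mul₀ (norm_nonneg _) zero_le_two (one_sub_norm_sq_le hz hl)
  gcongr
  exact div_nonneg (one_sub_norm_sq_nonneg hl) (norm_nonneg _)

lemma le_phiIntegrand (hp : 1 ≤ p) (hz : ‖z‖ = 1) {δ D : ℝ} (hδ : 0 < δ) (hl : ‖l‖ ≤ 1 - δ)
    (hD : ‖l - z‖ ≤ D) : (δ / D) ^ (p - 1) / D ≤ phiIntegrand p z l := by
  have hl₁ : ‖l‖ ≤ 1 := by linarith
  have hdist : δ ≤ ‖l - z‖ := by
    have := norm_sub_norm_le z l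
    rw [hz, norm_sub_rev] at this
    linarith
  have hnum : δ ≤ 1 - ‖l‖ ^ 2 := by nlinarith [norm_nonneg l]
  have hratio : δ / D ≤ (1 - ‖l‖ ^ 2) / ‖l - z‖ :=
    div_le_div₀ (by linarith) hnum (by linarith) hD
  rw [phiIntegrand_eq (by linarith) hz hl₁]
  exact div_le_div₀ (Real.rpow_nonneg (div_nonneg (one_sub_norm_sq_nonneg hl₁) (norm_nonneg _)) _)
    (Real.rpow_le_rpow (div_nonneg hδ.le (by linarith)) hratio (by linarith)) (by linarith) hD

end phiIntegrand

lemma integrableOn_inv_norm_sub_ball {E : Type*} [NormedAddCommGroup E] [NormedSpace ℝ E]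
    [FiniteDimensional ℝ E] [MeasurableSpace E] [BorelSpace E] (μ : Measure E)
    [μ.IsAddHaarMeasure] (hE : 1 < Module.finrank ℝ E) (z : E) (r : ℝ) :
    IntegrableOn (fun x => ‖x - z‖⁻¹) (ball z r) μ := by
  have h0 : IntegrableOn (fun x : E => ‖x‖⁻¹) (ball 0 r) μ :=
    integrableOn_ball_of_norm_le_rpow (C := 1) (α := 1) hE.le (by exact_mod_cast hE)
      (ae_of_all _ fun x => by simp [Real.rpow_neg_one]) (by fun_prop)
  have hpre : (· - z) ⁻¹' ball 0 r = ball z r := by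
    ext x
    simp [dist_eq_norm]
  rw [← hpre]
  exact ((measurePreserving_sub_right μ z).integrableOn_comp_preimage
    (measurableEmbedding_subRight z)).2 h0

lemma integrableOn_phiIntegrand {p : ℝ} (hp : 1 ≤ p) {z : ℂ} (hz : ‖z‖ = 1) :
    IntegrableOn (phiIntegrand p z) (closedBall 0 1) := by
  have hball : closedBall (0 : ℂ) 1 ⊆ ball z 3 := by
    intro l hl
    rw [mem_closedBall_zero_iff] at hl
    rw [mem_ball, dist_eq_norm]
    linarith [norm_sub_le l z]
  have hdom : IntegrableOn (fun l => 2 ^ (p - 1) * ‖l - z‖⁻¹) (closedBall 0 1) :=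
    ((integrableOn_inv_norm_sub_ball volume (by simp) z 3).mono_set hball).const_mul _
  have hmeas : Measurable (phiIntegrand p z) := by unfold phiIntegrand; fun_prop
  refine hdom.mono' hmeas.aestronglyMeasurable
    (ae_restrict_of_forall_mem measurableSet_closedBall fun l hl => ?_)
  rw [mem_closedBall_zero_iff] at hl
  rw [Real.norm_of_nonneg (phiIntegrand_nonneg hl)]
  exact phiIntegrand_le hp hz hl

lemma mul_measureReal_le_setIntegral {X : Type*} [MeasurableSpace X] {μ : Measure X}
    {f : X → ℝ} {B W K : Set X} {m : ℝ} (hB : MeasurableSet B) (hμB : μ B ≠ ⊤)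
    (hK : MeasurableSet K) (hBW : B ⊆ W) (hWK : W ⊆ K) (hf : IntegrableOn f K μ)
    (hf₀ : ∀ x ∈ K, 0 ≤ f x) (hm : ∀ x ∈ B, m ≤ f x) : m * μ.real B ≤ ∫ x in W, f x ∂μ :=
  calc m * μ.real B ≤ ∫ x in B, f x ∂μ :=
        setIntegral_ge_of_const_le_real hB hμB hm (hf.mono_set (hBW.trans hWK))
    _ ≤ ∫ x in W, f x ∂μ :=
        setIntegral_mono_set (hf.mono_set hWK)
          (ae_restrict_of_ae_restrict_of_subset hWK (ae_restrict_of_forall_mem hK hf₀))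
          hBW.eventuallyLE

lemma norm_ofReal_mul_exp_mul_I (r t : ℝ) : ‖(r : ℂ) * exp (t * I)‖ = |r| := by
  rw [norm_mul, norm_exp_ofReal_mul_I, mul_one, norm_real, Real.norm_eq_abs]

lemma dist_exp_mul_I_le (s t : ℝ) : dist (exp (s * I)) (exp (t * I)) ≤ dist s t := by
  have : exp (s * I) - exp (t * I) = exp (t * I) * (exp (I * (s - t : ℝ)) - 1) := by
    rw [mul_sub, mul_one, ← Complex.exp_add]; push_cast; ring_nf
  rw [dist_eq_norm, this, norm_mul, norm_exp_ofReal_mul_I, one_mul, Real.dist_eq,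
    ← Real.norm_eq_abs]
  exact Real.norm_exp_I_mul_ofReal_sub_one_le

lemma abs_arg_le_of_re_nonneg {w : ℂ} (hw : 0 ≤ w.re) : |arg w| ≤ π / 2 * (|w.im| / ‖w‖) := by
  have := Real.mul_abs_le_abs_sin (abs_arg_le_pi_div_two_iff.2 hw)
  rw [sin_arg, abs_div, abs_norm, div_mul_eq_mul_div, div_le_iff₀ Real.pi_pos] at this
  rw [div_mul_eq_mul_div, le_div_iff₀ two_pos]
  linarith

lemma norm_mul_exp_arg_rotate (l : ℂ) (t : ℝ) :
    (‖l‖ : ℂ) * exp ((arg (l * exp (-t * I)) + t : ℝ) * I) = l := by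
  have hw : ‖l * exp (-t * I)‖ = ‖l‖ := by
    rw [norm_mul, ← ofReal_neg, norm_exp_ofReal_mul_I, mul_one]
  have := norm_mul_exp_arg_mul_I (l * exp (-t * I))
  rw [hw] at this
  rw [ofReal_add, add_mul, Complex.exp_add, ← mul_assoc, this, mul_assoc, ← Complex.exp_add]
  simp

lemma ofReal_mul_exp_mem_cWindowH {a ℓ h r β : ℝ} (hr : 0 < r) (hr₁ : 1 - h ≤ r) (hr₂ : r ≤ 1)
    (hβ : β ∈ Ico a (a + 2 * π * ℓ)) : (r : ℂ) * exp (β * I) ∈ cWindowH a ℓ h := by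
  have hnorm : ‖(r : ℂ) * exp (β * I)‖ = r := by
    rw [norm_ofReal_mul_exp_mul_I, abs_of_pos hr]
  refine ⟨hnorm.symm ▸ hr₁, hnorm.symm ▸ hr₂, ?_⟩
  rw [hnorm, mul_div_cancel_left₀ _ (ofReal_ne_zero.2 hr.ne')]
  exact ⟨β, hβ, rfl⟩

lemma cWindowH_subset_closedBall (a ℓ h : ℝ) : cWindowH a ℓ h ⊆ closedBall 0 1 :=
  fun _ hl => mem_closedBall_zero_iff.2 hl.2.1

lemma closure_cArc_subset (a ℓ : ℝ) :
    closure (cArc a ℓ) ⊆ (fun θ : ℝ => exp (θ * I)) '' Icc a (a + 2 * π * ℓ) :=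
  closure_minimal (image_mono Ico_subset_Icc_self) (isCompact_Icc.image (by fun_prop)).isClosed

lemma exists_ball_subset_Ico {a b θ δ : ℝ} (hθ : θ ∈ Icc a b) (hδ₀ : 0 ≤ δ)
    (hδ : 4 * δ ≤ b - a) : ∃ t, dist θ t ≤ δ ∧ ball t δ ⊆ Ico a b := by
  by_cases hright : θ + 2 * δ ≤ b
  · refine ⟨θ + δ, by simp [abs_of_nonneg hδ₀], fun β hβ => ?_⟩
    rw [mem_ball, Real.dist_eq, abs_lt] at hβ
    exact ⟨by linarith [hθ.1], by linarith⟩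
  · refine ⟨θ - δ, by simp [abs_of_nonneg hδ₀], fun β hβ => ?_⟩
    rw [mem_ball, Real.dist_eq, abs_lt] at hβ
    exact ⟨by linarith, by linarith [hθ.2]⟩

lemma closedBall_subset_cWindowH {a ℓ h t : ℝ} (hh : 0 < h) (hh₁ : h ≤ 1)
    (ht : ball t h ⊆ Ico a (a + 2 * π * ℓ)) :
    closedBall (((1 - h / 2 : ℝ) : ℂ) * exp (t * I)) (h / 8) ⊆ cWindowH a ℓ h := by
  intro l hl
  -- `w` is `l` rotated back to the positive real axis, where the centre of the disc lies.
  obtain ⟨w, hw_def⟩ : ∃ w, l * exp (-t * I) = w := ⟨_, rfl⟩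
  have hw : ‖w - (1 - h / 2 : ℝ)‖ ≤ h / 8 := by
    have : w - (1 - h / 2 : ℝ) = (l - ((1 - h / 2 : ℝ) : ℂ) * exp (t * I)) * exp (-t * I) := by
      rw [← hw_def, sub_mul, mul_assoc, ← Complex.exp_add, neg_mul, add_neg_cancel,
        Complex.exp_zero, mul_one]
    rw [this, norm_mul, ← ofReal_neg, norm_exp_ofReal_mul_I, mul_one, ← dist_eq_norm]
    exact hl
  have hre : |w.re - (1 - h / 2)| ≤ h / 8 := by
    simpa using (abs_re_le_norm _).trans hw
  have him : |w.im| ≤ h / 8 := by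
    simpa using (abs_im_le_norm _).trans hw
  have hnorm : ‖w‖ = ‖l‖ := by
    rw [← hw_def, norm_mul, ← ofReal_neg, norm_exp_ofReal_mul_I, mul_one]
  have hlower : 1 - 5 * h / 8 ≤ ‖l‖ := by
    rw [← hnorm]; linarith [re_le_norm w, (abs_le.1 hre).1]
  have hupper : ‖l‖ ≤ 1 - 3 * h / 8 := by
    have := norm_le_norm_add_norm_sub' w (1 - h / 2 : ℝ)
    rw [norm_real, Real.norm_of_nonneg (by linarith)] at this
    linarith
  have harg : |arg w| < h := by
    have hratio : |w.im| / ‖w‖ ≤ h / 3 := by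
      rw [div_le_iff₀ (by rw [hnorm]; linarith), hnorm]
      nlinarith
    calc |arg w| ≤ π / 2 * (|w.im| / ‖w‖) :=
          abs_arg_le_of_re_nonneg (by linarith [(abs_le.1 hre).1])
      _ ≤ π / 2 * (h / 3) := by gcongr
      _ < h := by nlinarith [Real.pi_lt_four]
  rw [← norm_mul_exp_arg_rotate l t, hw_def]
  exact ofReal_mul_exp_mem_cWindowH (by linarith) (by linarith) (by linarith)
    (ht (by rwa [mem_ball, Real.dist_eq, add_sub_cancel_right]))

lemma le_phiIntegrand_of_mem_closedBall {p h θ t : ℝ} (hp : 1 ≤ p) (hh : 0 < h) (hh₁ : h ≤ 1)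
    (hθt : dist θ t ≤ h) {l : ℂ}
    (hl : l ∈ closedBall (((1 - h / 2 : ℝ) : ℂ) * exp (t * I)) (h / 8)) :
    (1 / 8) ^ (p - 1) / (2 * h) ≤ phiIntegrand p (exp (θ * I)) l := by
  set c : ℂ := ((1 - h / 2 : ℝ) : ℂ) * exp (t * I)
  rw [mem_closedBall, dist_eq_norm] at hl
  have hc : ‖c‖ = 1 - h / 2 := by
    rw [norm_ofReal_mul_exp_mul_I, abs_of_nonneg (by linarith)]
  have hc_circle : ‖c - exp (t * I)‖ = h / 2 := by
    have : c - exp (t * I) = ((-(h / 2) : ℝ) : ℂ) * exp (t * I) := by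
      simp only [c]; push_cast; ring
    rw [this, norm_ofReal_mul_exp_mul_I, abs_neg, abs_of_pos (by positivity)]
  have hnorm : ‖l‖ ≤ 1 - h / 4 := by
    linarith [norm_le_norm_add_norm_sub' l c]
  have hdist : ‖l - exp (θ * I)‖ ≤ 2 * h :=
    calc ‖l - exp (θ * I)‖ ≤ ‖l - exp (t * I)‖ + ‖exp (t * I) - exp (θ * I)‖ :=
          norm_sub_le_norm_sub_add_norm_sub _ _ _
      _ ≤ ‖l - c‖ + ‖c - exp (t * I)‖ + ‖exp (t * I) - exp (θ * I)‖ := by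
          gcongr
          exact norm_sub_le_norm_sub_add_norm_sub _ _ _
      _ ≤ h / 8 + h / 2 + h := by
          rw [hc_circle, ← dist_eq_norm (exp _), dist_comm (exp _)]
          gcongr
          exact (dist_exp_mul_I_le θ t).trans hθt
      _ ≤ 2 * h := by linarith
  have := le_phiIntegrand hp (norm_exp_ofReal_mul_I θ) (by positivity) hnorm hdist
  rwa [show h / 4 / (2 * h) = 1 / 8 by field_simp; norm_num] at this

/-- Uniform lower bound: there is `c > 0` depending only on `p` such that `φ_h(z) ≥ c`
for every arc `I`, every `0 < h ≤ |I|` and every `z` in the closure of `I`. -/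
theorem phi_lower_bound_on_arc (p : ℝ) (hp : 1 < p) :
    ∃ c > (0:ℝ), ∀ a ℓ h : ℝ, 0 < ℓ → ℓ ≤ 1 → 0 < h → h ≤ ℓ →
      ∀ z ∈ closure (cArc a ℓ), c ≤ cPhi p a ℓ h z := by
  refine ⟨π / 128 * (1 / 8) ^ (p - 1), by positivity, ?_⟩
  intro a ℓ h _ hℓ₁ hh hhℓ z hz
  obtain ⟨θ, hθ, rfl⟩ := closure_cArc_subset a ℓ hz
  obtain ⟨t, hθt, ht⟩ := exists_ball_subset_Ico hθ hh.le (by nlinarith [Real.pi_gt_three])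
  have hh₁ : h ≤ 1 := hhℓ.trans hℓ₁
  have key := mul_measureReal_le_setIntegral measurableSet_closedBall
    measure_closedBall_lt_top.ne measurableSet_closedBall (closedBall_subset_cWindowH hh hh₁ ht)
    (cWindowH_subset_closedBall a ℓ h) (integrableOn_phiIntegrand hp.le (norm_exp_ofReal_mul_I θ))
    (fun l hl => phiIntegrand_nonneg (mem_closedBall_zero_iff.1 hl))
    (fun l hl => le_phiIntegrand_of_mem_closedBall hp.le hh hh₁ hθt hl)
  rw [Measure.real, Complex.volume_closedBall] at key
  rw [cPhi_eq]
  calc π / 128 * (1 / 8) ^ (p - 1)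
      = 1 / h * ((1 / 8) ^ (p - 1) / (2 * h) * (π * (h / 8) ^ 2)) := by field_simp; ring
    _ ≤ 1 / h * ∫ l in cWindowH a ℓ h, phiIntegrand p (exp (θ * I)) l := by
        gcongr
        simpa [ENNReal.toReal_ofReal (by positivity : 0 ≤ h / 8), mul_comm] using key
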